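/- arXiv:1305.0440 — 3 statements merged into one kernel-verified Lean document; each statement's English description precedes it below -/
import Mathlib

section
/- Let a1, a2, a3 be nonzero real numbers with A = a1*a2 + a1*a3 + a2*a3 ≠ 0, and let x1, x2, x3 be positive reals. Then f(x1,x2,x3)/(a1*x1) + g(x1,x2,x3)/(a2*x2) + h(x1,x2,x3)/(a3*x3) = 0. (This expresses that the volume function V = x1^(1/a1) * x2^(1/a2) * x3^(1/a3) is a first integral of the system dx1/dt = f, dx2/dt = g, dx3/dt = h.) -/
noncomputable section
open Real Set

/-- The auxiliary function `B`. -/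
def Bfun (a1 a2 a3 x1 x2 x3 : ℝ) : ℝ :=
  (1/(a1*x1) + 1/(a2*x2) + 1/(a3*x3) - (x1/(x2*x3) + x2/(x1*x3) + x3/(x1*x2))) *
    (1/a1 + 1/a2 + 1/a3)⁻¹

/-- First component of the normalized Ricci flow vector field. -/
def fRF (a1 a2 a3 x1 x2 x3 : ℝ) : ℝ :=
  -1 - a1*x1*(x1/(x2*x3) - x2/(x1*x3) - x3/(x1*x2)) + x1 * Bfun a1 a2 a3 x1 x2 x3

/-- Second component of the normalized Ricci flow vector field. -/
def gRF (a1 a2 a3 x1 x2 x3 : ℝ) : ℝ :=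
  -1 - a2*x2*(x2/(x1*x3) - x3/(x1*x2) - x1/(x2*x3)) + x2 * Bfun a1 a2 a3 x1 x2 x3

/-- Third component of the normalized Ricci flow vector field. -/
def hRF (a1 a2 a3 x1 x2 x3 : ℝ) : ℝ :=
  -1 - a3*x3*(x3/(x1*x2) - x1/(x2*x3) - x2/(x1*x3)) + x3 * Bfun a1 a2 a3 x1 x2 x3

/-! Dividing each component by `aᵢ xᵢ` and summing, the terms `-aᵢ xᵢ (⋯)` contribute
`+ Σ xᵢ/(xⱼ xₖ)` (each quotient occurs once with a plus sign and twice with a minus sign), the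
constants contribute `- Σ 1/(aᵢ xᵢ)`, and the `xᵢ B` terms contribute `B · Σ 1/aᵢ`, which by the
definition of `B` is exactly the negative of the first two contributions once `Σ 1/aᵢ = A/(a₁a₂a₃)` is
cancelled. -/

section

variable {a1 a2 a3 x1 x2 x3 : ℝ}

lemma one_div_add_one_div_add_one_div_ne_zero (ha1 : a1 ≠ 0) (ha2 : a2 ≠ 0) (ha3 : a3 ≠ 0)
    (hA : a1*a2 + a1*a3 + a2*a3 ≠ 0) : 1/a1 + 1/a2 + 1/a3 ≠ 0 := by
  have hsum : 1/a1 + 1/a2 + 1/a3 = (a1*a2 + a1*a3 + a2*a3) / (a1*a2*a3) := by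
    field_simp
    ring
  rw [hsum]
  exact div_ne_zero hA (mul_ne_zero (mul_ne_zero ha1 ha2) ha3)

lemma Bfun_mul_one_div_add (h : 1/a1 + 1/a2 + 1/a3 ≠ 0) :
    Bfun a1 a2 a3 x1 x2 x3 * (1/a1 + 1/a2 + 1/a3) =
      1/(a1*x1) + 1/(a2*x2) + 1/(a3*x3) - (x1/(x2*x3) + x2/(x1*x3) + x3/(x1*x2)) :=
  inv_mul_cancel_right₀ h _

lemma fRF_div (ha1 : a1 ≠ 0) (hx1 : x1 ≠ 0) :
    fRF a1 a2 a3 x1 x2 x3 / (a1*x1) =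
      Bfun a1 a2 a3 x1 x2 x3 / a1 - 1/(a1*x1) - (x1/(x2*x3) - x2/(x1*x3) - x3/(x1*x2)) := by
  unfold fRF
  field_simp
  ring

lemma gRF_div (ha2 : a2 ≠ 0) (hx2 : x2 ≠ 0) :
    gRF a1 a2 a3 x1 x2 x3 / (a2*x2) =
      Bfun a1 a2 a3 x1 x2 x3 / a2 - 1/(a2*x2) - (x2/(x1*x3) - x3/(x1*x2) - x1/(x2*x3)) := by
  unfold gRF
  field_simp
  ring

lemma hRF_div (ha3 : a3 ≠ 0) (hx3 : x3 ≠ 0) :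
    hRF a1 a2 a3 x1 x2 x3 / (a3*x3) =
      Bfun a1 a2 a3 x1 x2 x3 / a3 - 1/(a3*x3) - (x3/(x1*x2) - x1/(x2*x3) - x2/(x1*x3)) := by
  unfold hRF
  field_simp
  ring

end

theorem volume_first_integral (a1 a2 a3 x1 x2 x3 : ℝ)
    (ha1 : a1 ≠ 0) (ha2 : a2 ≠ 0) (ha3 : a3 ≠ 0)
    (hA : a1*a2 + a1*a3 + a2*a3 ≠ 0)
    (hx1 : 0 < x1) (hx2 : 0 < x2) (hx3 : 0 < x3) :
    fRF a1 a2 a3 x1 x2 x3 / (a1*x1) + gRF a1 a2 a3 x1 x2 x3 / (a2*x2)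
      + hRF a1 a2 a3 x1 x2 x3 / (a3*x3) = 0 := by
  rw [fRF_div ha1 hx1.ne', gRF_div ha2 hx2.ne', hRF_div ha3 hx3.ne']
  linear_combination
    Bfun_mul_one_div_add (x1 := x1) (x2 := x2) (x3 := x3)
      (one_div_add_one_div_add_one_div_ne_zero ha1 ha2 ha3 hA)
end
end

section
/- Let a1, a2, a3 be real numbers with A = a1*a2 + a1*a3 + a2*a3 > 0. Then the quadratic form G(x,y,z) = (A + a1^2)*x^2 + (A + a2^2)*y^2 + (A + a3^2)*z^2 - 2*(a1*a3 + a2*a3)*x*y - 2*(a1*a2 + a1*a3)*y*z - 2*(a2*a3 + a1*a2)*x*z is nonnegative on all of R^3, and G(x,y,z) = 0 holds if and only if (x,y,z) = (t*(a2+a3), t*(a1+a3), t*(a1+a2)) for some real t. -/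
noncomputable section
open Real Set

/-- `A = a1*a2 + a1*a3 + a2*a3`. -/
def AA (a1 a2 a3 : ℝ) : ℝ := a1*a2 + a1*a3 + a2*a3

/-- The quadratic form `G`. -/
def Gform (a1 a2 a3 x y z : ℝ) : ℝ :=
  (AA a1 a2 a3 + a1^2)*x^2 + (AA a1 a2 a3 + a2^2)*y^2 + (AA a1 a2 a3 + a3^2)*z^2
    - 2*(a1*a3 + a2*a3)*x*y - 2*(a1*a2 + a1*a3)*y*z - 2*(a2*a3 + a1*a2)*x*z

theorem Gform_nonneg_and_zero_iff (a1 a2 a3 : ℝ) (hA : 0 < AA a1 a2 a3) (x y z : ℝ) :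
    0 ≤ Gform a1 a2 a3 x y z ∧
    (Gform a1 a2 a3 x y z = 0 ↔
      ∃ t : ℝ, x = t*(a2 + a3) ∧ y = t*(a1 + a3) ∧ z = t*(a1 + a2)) := by
  have hAe : AA a1 a2 a3 = a1*a2 + a1*a3 + a2*a3 := rfl
  set A : ℝ := a1*a2 + a1*a3 + a2*a3 with hAdef
  rw [hAe] at hA
  set q1 : ℝ := (A + a1^2)*x - (a1*a3 + a2*a3)*y - (a2*a3 + a1*a2)*z with hq1
  set f2 : ℝ := (a1+a2)*y - (a1+a3)*z with hf2
  have hP : 0 < A + a1^2 := by positivity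
  have key : (A + a1^2) * Gform a1 a2 a3 x y z = q1^2 + A * f2^2 := by
    simp only [Gform, hq1, hf2, hAe]; ring
  have hfac : A + a1^2 = (a1+a2)*(a1+a3) := by rw [hAdef]; ring
  have h12 : a1 + a2 ≠ 0 := by
    intro h; rw [h, zero_mul] at hfac; linarith
  have h13 : a1 + a3 ≠ 0 := by
    intro h; rw [h, mul_zero] at hfac; linarith
  have hnn : 0 ≤ Gform a1 a2 a3 x y z := by
    have h1 : 0 ≤ (A + a1^2) * Gform a1 a2 a3 x y z := by
      rw [key]; positivity
    nlinarith [h1, hP]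
  refine ⟨hnn, ?_, ?_⟩
  · intro h0
    have hsum : q1^2 + A * f2^2 = 0 := by rw [← key, h0, mul_zero]
    have hq2 : q1^2 = 0 ∧ A * f2^2 = 0 := by
      constructor <;> nlinarith [sq_nonneg q1, sq_nonneg f2, mul_nonneg hA.le (sq_nonneg f2)]
    have hq : q1 = 0 := by
      have := hq2.1; exact pow_eq_zero_iff (by norm_num) |>.mp this
    have hf : f2 = 0 := by
      have hf2z : f2^2 = 0 := by
        rcases mul_eq_zero.mp hq2.2 with h | h
        · exact absurd h (ne_of_gt hA)
        · exact h
      exact pow_eq_zero_iff (by norm_num) |>.mp hf2z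
    rw [hq1] at hq
    rw [hf2] at hf
    refine ⟨y / (a1 + a3), ?_, ?_, ?_⟩
    · -- x = t*(a2+a3)
      have hlin : (A + a1^2) * ((a1+a3)*x) = (A + a1^2) * ((a2+a3)*y) := by
        linear_combination (a1+a3)*hq - a2*(a1+a3)*hf
      have h' : (a1+a3)*x = (a2+a3)*y := mul_left_cancel₀ (ne_of_gt hP) hlin
      field_simp
      linarith [h']
    · field_simp
    · field_simp
      linarith [hf]
  · rintro ⟨t, hx, hy, hz⟩
    simp only [Gform, hAe, hx, hy, hz]; ring
end
end

section
/- Let a1, a2, a3 ∈ (0, 1/2]. Define φ(x1,x2) = x1^(-a3/a1) * x2^(-a3/a2) for x1, x2 > 0, and set f̃(x1,x2) = f(x1, x2, φ(x1,x2)) and g̃(x1,x2) = g(x1, x2, φ(x1,x2)). Suppose x1⁰, x2⁰ > 0 satisfy f̃(x1⁰,x2⁰) = g̃(x1⁰,x2⁰) = 0, and set x3⁰ = φ(x1⁰,x2⁰). Let J be the 2×2 Jacobian matrix of (f̃, g̃) at (x1⁰, x2⁰) and let J̃ be the 3×3 Jacobian matrix of (f, g, h) at (x1⁰, x2⁰,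 x3⁰). Then trace J = trace J̃ and det J = ((trace J̃)^2 - trace(J̃^2))/2, i.e., the trace and determinant of J equal, respectively, the coefficient ρ̃ and the coefficient δ̃ in the characteristic polynomial t^3 - ρ̃ t^2 + δ̃ t of J̃. -/
noncomputable section
open Real Set

/-- The 3×3 Jacobian matrix of `(f, g, h)` at `(x1, x2, x3)`,
with entries given by partial derivatives. -/
def Jmat3 (a1 a2 a3 x1 x2 x3 : ℝ) : Matrix (Fin 3) (Fin 3) ℝ :=
  !![deriv (fun s => fRF a1 a2 a3 s x2 x3) x1, deriv (fun s => fRF a1 a2 a3 x1 s x3) x2,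
       deriv (fun s => fRF a1 a2 a3 x1 x2 s) x3;
     deriv (fun s => gRF a1 a2 a3 s x2 x3) x1, deriv (fun s => gRF a1 a2 a3 x1 s x3) x2,
       deriv (fun s => gRF a1 a2 a3 x1 x2 s) x3;
     deriv (fun s => hRF a1 a2 a3 s x2 x3) x1, deriv (fun s => hRF a1 a2 a3 x1 s x3) x2,
       deriv (fun s => hRF a1 a2 a3 x1 x2 s) x3]

/-- The map `φ` parametrizing the level surface `V = 1`. -/
def phiV (a1 a2 a3 x1 x2 : ℝ) : ℝ := x1 ^ (-(a3/a1)) * x2 ^ (-(a3/a2))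

/-- The reduced planar system components. -/
def fTilde (a1 a2 a3 x1 x2 : ℝ) : ℝ := fRF a1 a2 a3 x1 x2 (phiV a1 a2 a3 x1 x2)

def gTilde (a1 a2 a3 x1 x2 : ℝ) : ℝ := gRF a1 a2 a3 x1 x2 (phiV a1 a2 a3 x1 x2)

/-- The 2×2 Jacobian matrix of the reduced planar system. -/
def Jmat2 (a1 a2 a3 x1 x2 : ℝ) : Matrix (Fin 2) (Fin 2) ℝ :=
  !![deriv (fun s => fTilde a1 a2 a3 s x2) x1, deriv (fun s => fTilde a1 a2 a3 x1 s) x2;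
     deriv (fun s => gTilde a1 a2 a3 s x2) x1, deriv (fun s => gTilde a1 a2 a3 x1 s) x2]


open Topology

/-!
`V = x1^(1/a1) x2^(1/a2) x3^(1/a3)` is a first integral of the flow:
`f/(a1 x1) + g/(a2 x2) + h/(a3 x3) = 0` identically. Differentiating this identity at an
equilibrium shows that the third row of the full Jacobian `J̃` is `c1 • row 1 + c2 • row 2`,
where `c_j = -(a3 x3)/(a_j x_j) = ∂φ/∂x_j`. So `J̃ = L T`, with `T` the first two rows of `J̃` and
`L = !![1, 0; 0, 1; c1, c2]` the Jacobian of the graph map `(x1, x2) ↦ (x1, x2, φ)`, while the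
chain rule gives `J = T L`. Since `tr (L T) = tr (T L)` and `tr ((L T)²) = tr ((T L)²)`, and a
`2 × 2` matrix has `det = (tr² - tr (·²)) / 2`, both claims follow.
-/

section LinearAlgebra

variable {R K : Type*} [CommRing R] [Field K]

theorem Matrix.two_mul_det_fin_two (A : Matrix (Fin 2) (Fin 2) R) :
    2 * A.det = A.trace ^ 2 - (A * A).trace := by
  simp only [Matrix.det_fin_two, Matrix.trace_fin_two, Matrix.mul_apply, Fin.sum_univ_two]
  ring

theorem Matrix.trace_det_mul_comm_fin_two [NeZero (2 : K)] {n : Type*} [Fintype n]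
    (T : Matrix (Fin 2) n K) (L : Matrix n (Fin 2) K) :
    (T * L).trace = (L * T).trace ∧
      (T * L).det = ((L * T).trace ^ 2 - (L * T * (L * T)).trace) / 2 := by
  have hsq : (L * T * (L * T)).trace = (T * L * (T * L)).trace := by
    rw [Matrix.mul_assoc, Matrix.trace_mul_comm]
    simp only [Matrix.mul_assoc]
  refine ⟨Matrix.trace_mul_comm T L, ?_⟩
  rw [hsq, Matrix.trace_mul_comm L T, ← Matrix.two_mul_det_fin_two]
  field_simp

theorem Matrix.eq_mul_submatrix_castSucc_of_row_eq (M : Matrix (Fin 3) (Fin 3) R) {c₁ c₂ : R}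
    (h : ∀ j, M 2 j = c₁ * M 0 j + c₂ * M 1 j) :
    M = !![1, 0; 0, 1; c₁, c₂] * M.submatrix Fin.castSucc id := by
  ext i j
  fin_cases i <;> simp [Matrix.mul_apply, Fin.sum_univ_two, h]

end LinearAlgebra

section Calculus

theorem hasDerivAt_comp_graph {F : ℝ → ℝ → ℝ} {φ : ℝ → ℝ} {φ' x : ℝ}
    (hF : DifferentiableAt ℝ (fun p : ℝ × ℝ => F p.1 p.2) (x, φ x)) (hφ : HasDerivAt φ φ' x) :
    HasDerivAt (fun s => F s (φ s)) (deriv (fun s => F s (φ x)) x + φ' * deriv (F x) (φ x)) x := by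
  set D := fderiv ℝ (fun p : ℝ × ℝ => F p.1 p.2) (x, φ x)
  have hfst : HasDerivAt (fun s => F s (φ x)) (D (1, 0)) x :=
    hF.hasFDerivAt.comp_hasDerivAt (f := fun s => (s, φ x)) x
      ((hasDerivAt_id x).prodMk (hasDerivAt_const x (φ x)))
  have hsnd : HasDerivAt (F x) (D (0, 1)) (φ x) :=
    hF.hasFDerivAt.comp_hasDerivAt (f := fun t => (x, t)) (φ x)
      ((hasDerivAt_const (φ x) x).prodMk (hasDerivAt_id _))
  have hsplit : ((1 : ℝ), φ') = ((1 : ℝ), (0 : ℝ)) + φ' • ((0 : ℝ), (1 : ℝ)) := by simp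
  rw [hfst.deriv, hsnd.deriv, ← smul_eq_mul, ← map_smul, ← map_add, ← hsplit]
  exact hF.hasFDerivAt.comp_hasDerivAt (f := fun s => (s, φ s)) x ((hasDerivAt_id x).prodMk hφ)

theorem deriv_div_add_deriv_div_add_deriv_div_eq_zero {F G H p q r : ℝ → ℝ} {x : ℝ}
    (hF : DifferentiableAt ℝ F x) (hG : DifferentiableAt ℝ G x) (hH : DifferentiableAt ℝ H x)
    (hp : DifferentiableAt ℝ p x) (hq : DifferentiableAt ℝ q x) (hr : DifferentiableAt ℝ r x)
    (hp0 : p x ≠ 0) (hq0 : q x ≠ 0) (hr0 : r x ≠ 0)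
    (hF0 : F x = 0) (hG0 : G x = 0) (hH0 : H x = 0)
    (hsum : ∀ᶠ s in 𝓝 x, F s / p s + G s / q s + H s / r s = 0) :
    deriv F x / p x + deriv G x / q x + deriv H x / r x = 0 := by
  have hderiv := ((hF.hasDerivAt.div hp.hasDerivAt hp0).add
    (hG.hasDerivAt.div hq.hasDerivAt hq0)).add (hH.hasDerivAt.div hr.hasDerivAt hr0)
  have hzero := (hasDerivAt_const x (0 : ℝ)).congr_of_eventuallyEq hsum
  simp only [hF0, hG0, hH0, zero_mul, sub_zero, pow_two, ← div_div, mul_div_cancel_right₀ _ hp0,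
    mul_div_cancel_right₀ _ hq0, mul_div_cancel_right₀ _ hr0] at hderiv
  exact hderiv.unique hzero

end Calculus

section RicciFlow

variable {a1 a2 a3 : ℝ}

theorem fRF_div_add_gRF_div_add_hRF_div_eq_zero {x1 x2 x3 : ℝ}
    (ha1 : a1 ≠ 0) (ha2 : a2 ≠ 0) (ha3 : a3 ≠ 0) (hA : AA a1 a2 a3 ≠ 0)
    (hx1 : x1 ≠ 0) (hx2 : x2 ≠ 0) (hx3 : x3 ≠ 0) :
    fRF a1 a2 a3 x1 x2 x3 / (a1*x1) + gRF a1 a2 a3 x1 x2 x3 / (a2*x2)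
      + hRF a1 a2 a3 x1 x2 x3 / (a3*x3) = 0 := by
  have hBcoeff : (1/a1 + 1/a2 + 1/a3)⁻¹ = a1 * a2 * a3 / AA a1 a2 a3 := by
    unfold AA at hA ⊢
    field_simp
    ring
  unfold fRF gRF hRF Bfun
  rw [hBcoeff]
  field_simp
  unfold AA
  ring

theorem hRF_eq_zero_of_fRF_eq_zero_of_gRF_eq_zero {x1 x2 x3 : ℝ}
    (ha1 : a1 ≠ 0) (ha2 : a2 ≠ 0) (ha3 : a3 ≠ 0) (hA : AA a1 a2 a3 ≠ 0)
    (hx1 : x1 ≠ 0) (hx2 : x2 ≠ 0) (hx3 : x3 ≠ 0)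
    (hf : fRF a1 a2 a3 x1 x2 x3 = 0) (hg : gRF a1 a2 a3 x1 x2 x3 = 0) :
    hRF a1 a2 a3 x1 x2 x3 = 0 := by
  have h := fRF_div_add_gRF_div_add_hRF_div_eq_zero ha1 ha2 ha3 hA hx1 hx2 hx3
  rwa [hf, hg, zero_div, zero_div, zero_add, zero_add, div_eq_zero_iff,
    or_iff_left (mul_ne_zero ha3 hx3)] at h

section Differentiability

variable {E : Type*} [NormedAddCommGroup E] [NormedSpace ℝ E] {u v w : E → ℝ} {e : E}
  (ha1 : a1 ≠ 0) (ha2 : a2 ≠ 0) (ha3 : a3 ≠ 0)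
  (hu : DifferentiableAt ℝ u e) (hv : DifferentiableAt ℝ v e) (hw : DifferentiableAt ℝ w e)
  (hu0 : u e ≠ 0) (hv0 : v e ≠ 0) (hw0 : w e ≠ 0)
include ha1 ha2 ha3 hu hv hw hu0 hv0 hw0

@[fun_prop]
theorem differentiableAt_fRF :
    DifferentiableAt ℝ (fun y => fRF a1 a2 a3 (u y) (v y) (w y)) e := by
  simp only [fRF, Bfun, div_eq_mul_inv]
  fun_prop (disch := simp [*])

@[fun_prop]
theorem differentiableAt_gRF :
    DifferentiableAt ℝ (fun y => gRF a1 a2 a3 (u y) (v y) (w y)) e := by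
  simp only [gRF, Bfun, div_eq_mul_inv]
  fun_prop (disch := simp [*])

@[fun_prop]
theorem differentiableAt_hRF :
    DifferentiableAt ℝ (fun y => hRF a1 a2 a3 (u y) (v y) (w y)) e := by
  simp only [hRF, Bfun, div_eq_mul_inv]
  fun_prop (disch := simp [*])

end Differentiability

theorem hasDerivAt_phiV_fst {x1 : ℝ} (x2 : ℝ) (hx1 : x1 ≠ 0) :
    HasDerivAt (fun s => phiV a1 a2 a3 s x2) (-(a3 * phiV a1 a2 a3 x1 x2) / (a1 * x1)) x1 := by
  refine ((hasDerivAt_rpow_const (Or.inl hx1)).mul_const (x2 ^ (-(a3/a2)))).congr_deriv ?_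
  rw [phiV, rpow_sub_one hx1]
  ring

theorem hasDerivAt_phiV_snd (x1 : ℝ) {x2 : ℝ} (hx2 : x2 ≠ 0) :
    HasDerivAt (phiV a1 a2 a3 x1) (-(a3 * phiV a1 a2 a3 x1 x2) / (a2 * x2)) x2 := by
  refine ((hasDerivAt_rpow_const (Or.inl hx2)).const_mul (x1 ^ (-(a3/a1)))).congr_deriv ?_
  rw [phiV, rpow_sub_one hx2]
  ring

theorem Jmat3_eq_mul_submatrix {x1 x2 x3 : ℝ}
    (ha1 : a1 ≠ 0) (ha2 : a2 ≠ 0) (ha3 : a3 ≠ 0) (hA : AA a1 a2 a3 ≠ 0)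
    (hx1 : x1 ≠ 0) (hx2 : x2 ≠ 0) (hx3 : x3 ≠ 0) (hf : fRF a1 a2 a3 x1 x2 x3 = 0)
    (hg : gRF a1 a2 a3 x1 x2 x3 = 0) (hh : hRF a1 a2 a3 x1 x2 x3 = 0) :
    Jmat3 a1 a2 a3 x1 x2 x3 = !![1, 0; 0, 1; -(a3 * x3) / (a1 * x1), -(a3 * x3) / (a2 * x2)] *
      (Jmat3 a1 a2 a3 x1 x2 x3).submatrix Fin.castSucc id := by
  have hcons {y1 y2 y3 : ℝ} (h1 : y1 ≠ 0) (h2 : y2 ≠ 0) (h3 : y3 ≠ 0) :=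
    fRF_div_add_gRF_div_add_hRF_div_eq_zero ha1 ha2 ha3 hA h1 h2 h3
  have hp0 := mul_ne_zero ha1 hx1
  have hq0 := mul_ne_zero ha2 hx2
  have hr0 := mul_ne_zero ha3 hx3
  refine Matrix.eq_mul_submatrix_castSucc_of_row_eq _ fun j => ?_
  have hcol : Jmat3 a1 a2 a3 x1 x2 x3 0 j / (a1 * x1) + Jmat3 a1 a2 a3 x1 x2 x3 1 j / (a2 * x2)
      + Jmat3 a1 a2 a3 x1 x2 x3 2 j / (a3 * x3) = 0 := by
    fin_cases j
    · refine deriv_div_add_deriv_div_add_deriv_div_eq_zero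
        (p := fun s => a1 * s) (q := fun _ => a2 * x2) (r := fun _ => a3 * x3)
        (by fun_prop (disch := assumption)) (by fun_prop (disch := assumption))
        (by fun_prop (disch := assumption)) (by fun_prop) (by fun_prop) (by fun_prop)
        hp0 hq0 hr0 hf hg hh ?_
      filter_upwards [eventually_ne_nhds hx1] with s hs using hcons hs hx2 hx3
    · refine deriv_div_add_deriv_div_add_deriv_div_eq_zero
        (p := fun _ => a1 * x1) (q := fun t => a2 * t) (r := fun _ => a3 * x3)
        (by fun_prop (disch := assumption)) (by fun_prop (disch := assumption))
        (by fun_prop (disch := assumption)) (by fun_prop) (by fun_prop) (by fun_prop)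
        hp0 hq0 hr0 hf hg hh ?_
      filter_upwards [eventually_ne_nhds hx2] with t ht using hcons hx1 ht hx3
    · refine deriv_div_add_deriv_div_add_deriv_div_eq_zero
        (p := fun _ => a1 * x1) (q := fun _ => a2 * x2) (r := fun u => a3 * u)
        (by fun_prop (disch := assumption)) (by fun_prop (disch := assumption))
        (by fun_prop (disch := assumption)) (by fun_prop) (by fun_prop) (by fun_prop)
        hp0 hq0 hr0 hf hg hh ?_
      filter_upwards [eventually_ne_nhds hx3] with u hu using hcons hx1 hx2 hu
  field_simp at hcol ⊢
  linear_combination hcol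

theorem Jmat2_eq_submatrix_mul {x1 x2 : ℝ} (ha1 : a1 ≠ 0) (ha2 : a2 ≠ 0) (ha3 : a3 ≠ 0)
    (hx1 : 0 < x1) (hx2 : 0 < x2) :
    Jmat2 a1 a2 a3 x1 x2 = (Jmat3 a1 a2 a3 x1 x2 (phiV a1 a2 a3 x1 x2)).submatrix Fin.castSucc id *
      !![1, 0; 0, 1; -(a3 * phiV a1 a2 a3 x1 x2) / (a1 * x1),
        -(a3 * phiV a1 a2 a3 x1 x2) / (a2 * x2)] := by
  have hx3 : phiV a1 a2 a3 x1 x2 ≠ 0 := by unfold phiV; positivity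
  have hφ₁ := hasDerivAt_phiV_fst (a1 := a1) (a2 := a2) (a3 := a3) x2 hx1.ne'
  have hφ₂ := hasDerivAt_phiV_snd (a1 := a1) (a2 := a2) (a3 := a3) x1 hx2.ne'
  have hf₁ := hasDerivAt_comp_graph (F := fun s u => fRF a1 a2 a3 s x2 u)
    (by fun_prop (disch := simp [*, hx1.ne', hx2.ne'])) hφ₁
  have hg₁ := hasDerivAt_comp_graph (F := fun s u => gRF a1 a2 a3 s x2 u)
    (by fun_prop (disch := simp [*, hx1.ne', hx2.ne'])) hφ₁
  have hf₂ := hasDerivAt_comp_graph (F := fun t u => fRF a1 a2 a3 x1 t u)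
    (by fun_prop (disch := simp [*, hx1.ne', hx2.ne'])) hφ₂
  have hg₂ := hasDerivAt_comp_graph (F := fun t u => gRF a1 a2 a3 x1 t u)
    (by fun_prop (disch := simp [*, hx1.ne', hx2.ne'])) hφ₂
  ext i j
  fin_cases i <;> fin_cases j <;>
    simp only [Jmat2, Jmat3, fTilde, gTilde, hf₁.deriv, hf₂.deriv, hg₁.deriv, hg₂.deriv,
      Matrix.mul_apply, Matrix.submatrix_apply, Fin.sum_univ_three, Matrix.of_apply,
      Matrix.cons_val', Matrix.cons_val, Matrix.cons_val_zero, Matrix.cons_val_one,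
      Matrix.cons_val_fin_one, Fin.castSucc_zero, Fin.castSucc_one, Fin.zero_eta, Fin.mk_one,
      Fin.isValue, id_eq] <;>
    ring

end RicciFlow

theorem reduced_jacobian_trace_det (a1 a2 a3 x1 x2 : ℝ)
    (ha1 : a1 ∈ Ioc (0:ℝ) (1/2)) (ha2 : a2 ∈ Ioc (0:ℝ) (1/2)) (ha3 : a3 ∈ Ioc (0:ℝ) (1/2))
    (hx1 : 0 < x1) (hx2 : 0 < x2)
    (hf : fTilde a1 a2 a3 x1 x2 = 0) (hg : gTilde a1 a2 a3 x1 x2 = 0) :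
    (Jmat2 a1 a2 a3 x1 x2).trace = (Jmat3 a1 a2 a3 x1 x2 (phiV a1 a2 a3 x1 x2)).trace ∧
    (Jmat2 a1 a2 a3 x1 x2).det
      = ((Jmat3 a1 a2 a3 x1 x2 (phiV a1 a2 a3 x1 x2)).trace^2
          - (Jmat3 a1 a2 a3 x1 x2 (phiV a1 a2 a3 x1 x2)
              * Jmat3 a1 a2 a3 x1 x2 (phiV a1 a2 a3 x1 x2)).trace) / 2 := by
  have ha1' : a1 ≠ 0 := ha1.1.ne'
  have ha2' : a2 ≠ 0 := ha2.1.ne'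
  have ha3' : a3 ≠ 0 := ha3.1.ne'
  have hA : AA a1 a2 a3 ≠ 0 := by
    have := ha1.1; have := ha2.1; have := ha3.1
    unfold AA; positivity
  have hx3 : phiV a1 a2 a3 x1 x2 ≠ 0 := by unfold phiV; positivity
  have hh := hRF_eq_zero_of_fRF_eq_zero_of_gRF_eq_zero ha1' ha2' ha3' hA hx1.ne' hx2.ne' hx3 hf hg
  have key := Matrix.trace_det_mul_comm_fin_two
    ((Jmat3 a1 a2 a3 x1 x2 (phiV a1 a2 a3 x1 x2)).submatrix Fin.castSucc id)
    !![1, 0; 0, 1; -(a3 * phiV a1 a2 a3 x1 x2) / (a1 * x1),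
      -(a3 * phiV a1 a2 a3 x1 x2) / (a2 * x2)]
  rwa [← Jmat2_eq_submatrix_mul ha1' ha2' ha3' hx1 hx2,
    ← Jmat3_eq_mul_submatrix ha1' ha2' ha3' hA hx1.ne' hx2.ne' hx3 hf hg hh] at key
end
end
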